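/- Let Γ be a finite cubic graph containing a bridge (an edge whose removal disconnects the graph). Then Γ admits no proper 3-edge-coloring. -/

import Mathlib

/-!
Each colour class of a proper edge colouring of a `k`-regular graph with `k` colours is a
perfect matching. Let `S` be the side of the bridge `ab` containing `a`. A perfect matching
pairs up the vertices of `S` except those matched across the cut, and the bridge is the only
edge crossing it. So a colour class avoiding the bridge makes `|S|` even, while the colour
class of the bridge leaves exactly `a` unpaired inside `S` and makes `|S|` odd.
-/

open Finset Function

namespace Finset

variable {ι : Type*}

theorem even_card_of_involutive {s : Finset ι} {g : ι → ι} (hg : Involutive g)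
    (hfix : ∀ x, g x ≠ x) (hs : ∀ x ∈ s, g x ∈ s) : Even #s := by
  rw [← ZMod.natCast_eq_zero_iff_even, card_eq_sum_ones, Nat.cast_sum, Nat.cast_one]
  exact sum_involution (fun x _ ↦ g x) (fun _ _ ↦ by decide) (fun x _ _ ↦ hfix x) hs
    (fun x _ ↦ hg x)

theorem even_card_iff_even_card_filter_apply_notMem [DecidableEq ι] (s : Finset ι)
    {g : ι → ι} (hg : Involutive g) (hfix : ∀ x, g x ≠ x) :
    Even #s ↔ Even #{x ∈ s | g x ∉ s} := by
  have hpaired : Even #{x ∈ s | g x ∈ s} :=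
    even_card_of_involutive hg hfix fun x hx ↦ by
      rw [mem_filter] at hx ⊢
      exact ⟨hx.2, (hg x).symm ▸ hx.1⟩
  rw [← card_filter_add_card_filter_not (fun x ↦ g x ∈ s), Nat.even_add]
  exact iff_true_left hpaired

end Finset

namespace SimpleGraph

variable {V α : Type*}

def IsProperEdgeColoring (G : SimpleGraph V) (f : Sym2 V → α) : Prop :=
  ∀ v, Set.InjOn f (G.incidenceSet v)

variable {G : SimpleGraph V}

theorem IsBridge.reachable_and_not_reachable_iff {a b v w : V} (hbr : G.IsBridge s(a, b))
    (hvw : G.Adj v w) :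
    ((G.deleteEdges {s(a, b)}).Reachable a v ∧ ¬(G.deleteEdges {s(a, b)}).Reachable a w) ↔
      v = a ∧ w = b := by
  constructor
  · rintro ⟨hv, hw⟩
    have hedge : s(v, w) = s(a, b) := by
      by_contra hne
      exact hw (hv.trans (deleteEdges_adj.2 ⟨hvw, hne⟩).reachable)
    rcases Sym2.eq_iff.1 hedge with h | ⟨rfl, rfl⟩
    · exact h
    · exact absurd hv hbr
  · rintro ⟨rfl, rfl⟩
    exact ⟨.refl v, hbr⟩

namespace IsProperEdgeColoring

variable [G.LocallyFinite] [Fintype α] {f : Sym2 V → α}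

theorem bijective_neighborSet (hf : G.IsProperEdgeColoring f)
    (hdeg : ∀ v, G.degree v = Fintype.card α) (v : V) :
    Bijective fun w : G.neighborSet v ↦ f s(v, w) := by
  refine (Fintype.bijective_iff_injective_and_card _).2 ⟨fun w₁ w₂ h ↦ ?_, ?_⟩
  · exact Subtype.ext <| Sym2.congr_right.1 <|
      hf v ((G.mem_incidenceSet v w₁).2 w₁.2) ((G.mem_incidenceSet v w₂).2 w₂.2) h
  · rw [card_neighborSet_eq_degree, hdeg]

variable (hf : G.IsProperEdgeColoring f) (hdeg : ∀ v, G.degree v = Fintype.card α)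

/-- The neighbour of `v` joined to it by the edge of colour `c`. -/
noncomputable def mate (c : α) (v : V) : V :=
  ((Equiv.ofBijective _ (hf.bijective_neighborSet hdeg v)).symm c : G.neighborSet v)

theorem adj_mate (c : α) (v : V) : G.Adj v (hf.mate hdeg c v) :=
  ((Equiv.ofBijective _ (hf.bijective_neighborSet hdeg v)).symm c).2

theorem mate_eq_iff {c : α} {v w : V} (hvw : G.Adj v w) :
    hf.mate hdeg c v = w ↔ f s(v, w) = c := by
  change _ = (⟨w, hvw⟩ : G.neighborSet v).1 ↔ _
  rw [mate, ← Subtype.ext_iff, Equiv.symm_apply_eq, eq_comm]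
  rfl

theorem color_mate (c : α) (v : V) : f s(v, hf.mate hdeg c v) = c :=
  (hf.mate_eq_iff hdeg (hf.adj_mate hdeg c v)).1 rfl

theorem mate_involutive (c : α) : Involutive (hf.mate hdeg c) := fun v ↦
  (hf.mate_eq_iff hdeg (hf.adj_mate hdeg c v).symm).2 (Sym2.eq_swap ▸ hf.color_mate hdeg c v)

theorem mate_ne (c : α) (v : V) : hf.mate hdeg c v ≠ v :=
  (hf.adj_mate hdeg c v).ne'

end IsProperEdgeColoring

theorem IsBridge.not_isProperEdgeColoring [Fintype V] [DecidableRel G.Adj] [Fintype α]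
    [Nontrivial α] {a b : V} (hbr : G.IsBridge s(a, b)) (hab : G.Adj a b)
    (hdeg : ∀ v, G.degree v = Fintype.card α) (f : Sym2 V → α) : ¬G.IsProperEdgeColoring f := by
  classical
  intro hf
  let S : Finset V := {v | (G.deleteEdges {s(a, b)}).Reachable a v}
  have hcross : ∀ c v, v ∈ S ∧ hf.mate hdeg c v ∉ S ↔ v = a ∧ c = f s(a, b) := by
    intro c v
    simp only [S, mem_filter_univ,
      hbr.reachable_and_not_reachable_iff (hf.adj_mate hdeg c v)]
    refine and_congr_right fun hva ↦ ?_
    subst hva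
    exact (hf.mate_eq_iff hdeg hab).trans eq_comm
  obtain ⟨c, hc⟩ := exists_ne (f s(a, b))
  have heven : Even #S := by
    rw [S.even_card_iff_even_card_filter_apply_notMem (hf.mate_involutive hdeg c)
      (hf.mate_ne hdeg c), filter_eq_empty_iff.2 fun v hv hout ↦ hc ((hcross c v).1 ⟨hv, hout⟩).2]
    exact .zero
  have hodd : ¬Even #S := by
    rw [S.even_card_iff_even_card_filter_apply_notMem (hf.mate_involutive hdeg (f s(a, b)))
      (hf.mate_ne hdeg _)]
    have : {v ∈ S | hf.mate hdeg (f s(a, b)) v ∉ S} = {a} := by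
      ext v
      rw [mem_filter, hcross, mem_singleton, and_iff_left rfl]
    rw [this, card_singleton]
    exact Nat.not_even_one
  exact hodd heven

end SimpleGraph

theorem stmt_18_general {V : Type*} [Fintype V]
    (Γ : SimpleGraph V) [DecidableRel Γ.Adj]
    (hconn : Γ.Connected)
    (hreg : ∀ v : V, Γ.degree v = 3)
    (ed : Sym2 V) (hbridge : Γ.IsBridge ed) :
    ¬ ∃ f : Sym2 V → Fin 3,
        ∀ (v : V) (e₁ e₂ : Sym2 V), e₁ ∈ Γ.incidenceSet v →
          e₂ ∈ Γ.incidenceSet v → e₁ ≠ e₂ → f e₁ ≠ f e₂ := by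
  rintro ⟨f, hf⟩
  induction ed using Sym2.ind with | _ a b
  -- `IsBridge` alone does not make `ed` an edge of `Γ`.
  have hab : Γ.Adj a b := hbridge.reachable_iff_adj.1 (hconn.preconnected a b)
  refine hbridge.not_isProperEdgeColoring hab (by simpa using hreg) f ?_
  exact fun v e₁ h₁ e₂ h₂ h ↦ by_contra fun hne ↦ hf v e₁ e₂ h₁ h₂ hne h

/-- A finite connected cubic graph with a bridge admits no proper
3-edge-coloring. -/
theorem stmt_18 {V : Type*} [Fintype V] [DecidableEq V]
    (Γ : SimpleGraph V) [DecidableRel Γ.Adj]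
    (hconn : Γ.Connected)
    (hreg : ∀ v : V, Γ.degree v = 3)
    (ed : Sym2 V) (hbridge : Γ.IsBridge ed) :
    ¬ ∃ f : Sym2 V → Fin 3,
        ∀ (v : V) (e₁ e₂ : Sym2 V), e₁ ∈ Γ.incidenceSet v →
          e₂ ∈ Γ.incidenceSet v → e₁ ≠ e₂ → f e₁ ≠ f e₂ :=
  stmt_18_general Γ hconn hreg ed hbridge
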